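/- Let (Z_i)_{i≥1} be real-valued random variables on a probability space with E[Z_i] = μ and E[Z_i^4] < ∞ for all i, and let (d_n), (K_n) be sequences of positive integers with n = K_n · d_n for each n in an index sequence. Suppose: (i) d_n → ∞ and K_n → ∞ as n → ∞; (ii) there is σ² ∈ (0, ∞) such that sup_{1≤k≤K_n} | d_n · E[(W_{n,k} − μ)²] − σ² | → 0 as n → ∞; (iii) there is a constant C < ∞ such that n² · E[(ΔW_n − μ)^4] ≤ C for all n and d_n² · E[(W_{n,k} − μ)^4] ≤ C for all n and all 1 ≤ k ≤ K_n; (iv) for each n, the block random vectors (Z_{(k−1)d_n+1}, …, Z_{k d_n}), k = 1, …, K_n, are pairwise independent. Then the blockwise variance estimator σ̂_n² converges to σ² in L², i.e., E[(σ̂_n² − σ²)²] → 0 as n → ∞. -/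

import Mathlib

open MeasureTheory ProbabilityTheory Filter Topology

variable {Ω : Type*} [MeasurableSpace Ω]

/-- The overall mean `ΔW_n = (1/n) ∑_{i=1}^n Z_i`. -/
noncomputable def overallMean (Z : ℕ → Ω → ℝ) (n : ℕ) (ω : Ω) : ℝ :=
  (∑ i ∈ Finset.Icc 1 n, Z i ω) / n

/-- The `k`-th block mean `W_{n,k} = (1/d) ∑_{i=(k-1)d+1}^{kd} Z_i`. -/
noncomputable def blockMean (Z : ℕ → Ω → ℝ) (d k : ℕ) (ω : Ω) : ℝ :=
  (∑ i ∈ Finset.Ioc ((k - 1) * d) (k * d), Z i ω) / d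

/-- The blockwise variance estimator
`σ̂² = (d/K) ∑_{k=1}^K (W_k − ΔW_n)²`, where `n = K·d`. -/
noncomputable def blockVarEst (Z : ℕ → Ω → ℝ) (d K : ℕ) (ω : Ω) : ℝ :=
  ((d : ℝ) / K) * ∑ k ∈ Finset.Icc 1 K, (blockMean Z d k ω - overallMean Z (K * d) ω) ^ 2

/-- The `k`-th block of `Z` (indices `(k-1)d+1, …, kd`), as a random vector in `ℝ^d`. -/
def blockVec (Z : ℕ → Ω → ℝ) (d k : ℕ) (ω : Ω) : Fin d → ℝ :=
  fun i => Z ((k - 1) * d + 1 + (i : ℕ)) ω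

/-! Since `ΔW_n` is the average of the block means, `σ̂_n² − σ² = K⁻¹ ∑_k ξ_k − d Δ²` with
`ξ_k = d (W_{n,k} − μ)² − σ²` and `Δ = ΔW_n − μ`. The `ξ_k` are functions of distinct blocks, hence
pairwise independent, with `|E ξ_k| ≤ ε_n → 0` uniformly in `k` by (ii) and `E ξ_k² ≤ 2(C + σ²)` by
(iii); so `E (K⁻¹ ∑_k ξ_k)² = Var + mean² ≤ 2(C + σ²)/K + ε_n²`. Also `E (d Δ²)² = d² E Δ⁴ ≤ C/K²`
by (iii), and `(a − b)² ≤ 2a² + 2b²` combines the two bounds, which vanish as `K_n → ∞`. -/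

open Finset

theorem memLp_four_iff_integrable_pow_four {α : Type*} {m : MeasurableSpace α} {μ : Measure α}
    {f : α → ℝ} (hf : AEStronglyMeasurable f μ) :
    MemLp f 4 μ ↔ Integrable (fun x => f x ^ 4) μ := by
  rw [← integrable_norm_rpow_iff hf (by norm_num) (by norm_num)]
  congr! 2 with x
  rw [show (4 : ENNReal).toReal = (4 : ℕ) by norm_num, Real.rpow_natCast, Real.norm_eq_abs,
    Even.pow_abs (by decide)]

theorem MeasureTheory.MemLp.sq_of_four {α : Type*} {m : MeasurableSpace α} {μ : Measure α}
    {f : α → ℝ} (hf : MemLp f 4 μ) : MemLp (fun x => f x ^ 2) 2 μ :=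
  (memLp_two_iff_integrable_sq (hf.1.pow 2)).2 <| by
    simpa only [Pi.pow_apply, ← pow_mul] using (memLp_four_iff_integrable_pow_four hf.1).1 hf

theorem sum_Icc_mul_eq_sum_sum_Ioc {M : Type*} [AddCommMonoid M] (f : ℕ → M) (d K : ℕ) :
    ∑ i ∈ Icc 1 (K * d), f i = ∑ k ∈ Icc 1 K, ∑ i ∈ Ioc ((k - 1) * d) (k * d), f i := by
  have hIcc : ∀ n, Icc 1 n = Ioc 0 n := fun n => Icc_add_one_left_eq_Ioc 0 n
  induction K with
  | zero => simp
  | succ K ih =>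
    rw [sum_Icc_succ_top (by omega), ← ih, Nat.add_sub_cancel, hIcc, hIcc,
      sum_Ioc_consecutive _ (Nat.zero_le _) (Nat.mul_le_mul_right _ K.le_succ)]

theorem sum_sq_sub_eq_of_sum_eq {ι : Type*} (s : Finset ι) (x : ι → ℝ) {a : ℝ}
    (ha : ∑ k ∈ s, x k = #s * a) (c : ℝ) :
    ∑ k ∈ s, (x k - a) ^ 2 = ∑ k ∈ s, (x k - c) ^ 2 - #s * (a - c) ^ 2 := by
  have h : ∑ k ∈ s, ((x k - a) ^ 2 - (x k - c) ^ 2)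
      = 2 * (c - a) * ∑ k ∈ s, x k + #s * (a ^ 2 - c ^ 2) := by
    rw [mul_sum, ← nsmul_eq_mul, ← sum_const, ← sum_add_distrib]
    exact sum_congr rfl fun k _ => by ring
  rw [sum_sub_distrib, ha] at h
  linear_combination h

-- Rebinding `Ω` keeps the ambient `[MeasurableSpace Ω]` out of these measure-free identities.
theorem natCast_mul_blockMean {Ω : Type*} (Z : ℕ → Ω → ℝ) (d k : ℕ) (ω : Ω) :
    (d : ℝ) * blockMean Z d k ω = ∑ i ∈ Ioc ((k - 1) * d) (k * d), Z i ω := by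
  rcases eq_or_ne d 0 with rfl | hd
  · simp
  · exact mul_div_cancel₀ _ (Nat.cast_ne_zero.2 hd)

theorem overallMean_mul_eq_average_blockMean {Ω : Type*} (Z : ℕ → Ω → ℝ) (d K : ℕ) (ω : Ω) :
    overallMean Z (K * d) ω = (∑ k ∈ Icc 1 K, blockMean Z d k ω) / K := by
  rcases eq_or_ne d 0 with rfl | hd
  · simp [overallMean, blockMean]
  rw [overallMean, sum_Icc_mul_eq_sum_sum_Ioc,
    ← sum_congr rfl fun k _ => natCast_mul_blockMean Z d k ω, ← mul_sum, Nat.cast_mul,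
    mul_comm (K : ℝ), mul_div_mul_left _ _ (Nat.cast_ne_zero.2 hd)]

theorem blockVarEst_sub_eq {Ω : Type*} (Z : ℕ → Ω → ℝ) (μ σ2 : ℝ) {d K : ℕ} (hK : K ≠ 0)
    (ω : Ω) :
    blockVarEst Z d K ω - σ2
      = (∑ k ∈ Icc 1 K, ((d : ℝ) * (blockMean Z d k ω - μ) ^ 2 - σ2)) / K
        - d * (overallMean Z (K * d) ω - μ) ^ 2 := by
  have hK' : (K : ℝ) ≠ 0 := Nat.cast_ne_zero.2 hK
  have hsum : ∑ k ∈ Icc 1 K, blockMean Z d k ω = #(Icc 1 K) * overallMean Z (K * d) ω := by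
    rw [overallMean_mul_eq_average_blockMean, Nat.card_Icc, Nat.add_sub_cancel,
      mul_div_cancel₀ _ hK']
  rw [blockVarEst, sum_sq_sub_eq_of_sum_eq _ _ hsum μ, sum_sub_distrib, ← mul_sum, sum_const,
    Nat.card_Icc, Nat.add_sub_cancel, nsmul_eq_mul]
  field_simp
  ring

theorem blockMean_eq_sum_blockVec {Ω : Type*} (Z : ℕ → Ω → ℝ) (d : ℕ) {k : ℕ} (hk : 1 ≤ k)
    (ω : Ω) :
    blockMean Z d k ω = (∑ i, blockVec Z d k ω i) / d := by
  obtain ⟨j, rfl⟩ := Nat.exists_eq_add_of_le' hk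
  simp only [blockMean, blockVec]
  rw [Fin.sum_univ_eq_sum_range (fun i => Z ((j + 1 - 1) * d + 1 + i) ω),
    ← Ico_add_one_add_one_eq_Ioc, sum_Ico_eq_sum_range, Nat.add_sub_cancel, add_mul, one_mul,
    Nat.add_sub_add_right, Nat.add_sub_cancel_left]

theorem integral_sq_sub_le {α : Type*} {m : MeasurableSpace α} {μ : Measure α} {f g : α → ℝ}
    (hf : MemLp f 2 μ) (hg : MemLp g 2 μ) :
    ∫ x, (f x - g x) ^ 2 ∂μ ≤ 2 * ∫ x, f x ^ 2 ∂μ + 2 * ∫ x, g x ^ 2 ∂μ := by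
  rw [← integral_const_mul, ← integral_const_mul,
    ← integral_add (hf.integrable_sq.const_mul 2) (hg.integrable_sq.const_mul 2)]
  exact integral_mono (hf.sub hg).integrable_sq
    ((hf.integrable_sq.const_mul 2).add (hg.integrable_sq.const_mul 2))
    fun x => by nlinarith [sq_nonneg (f x + g x)]

theorem integral_sq_average_le {α ι : Type*} {m : MeasurableSpace α} {μ : Measure α}
    [IsProbabilityMeasure μ] {X : ι → α → ℝ} {s : Finset ι} (hs : s.Nonempty) {M ε : ℝ}
    (hX : ∀ i ∈ s, MemLp (X i) 2 μ)
    (hindep : (s : Set ι).Pairwise fun i j => IndepFun (X i) (X j) μ)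
    (hM : ∀ i ∈ s, ∫ x, X i x ^ 2 ∂μ ≤ M) (hε : ∀ i ∈ s, |∫ x, X i x ∂μ| ≤ ε) :
    ∫ x, ((∑ i ∈ s, X i x) / #s) ^ 2 ∂μ ≤ M / #s + ε ^ 2 := by
  have hn : (0 : ℝ) < #s := Nat.cast_pos.2 hs.card_pos
  have hS : MemLp (∑ i ∈ s, X i) 2 μ := memLp_finsetSum' s hX
  have hvar : Var[∑ i ∈ s, X i; μ] ≤ #s * M := by
    rw [IndepFun.variance_sum hX hindep, ← nsmul_eq_mul]
    exact sum_le_card_nsmul _ _ _ fun i hi =>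
      (variance_le_expectation_sq (hX i hi).1).trans (hM i hi)
  have hmean : |∫ x, ∑ i ∈ s, X i x ∂μ| ≤ #s * ε := by
    rw [integral_finsetSum s fun i hi => (hX i hi).integrable one_le_two, ← nsmul_eq_mul]
    exact (abs_sum_le_sum_abs _ _).trans (sum_le_card_nsmul _ _ _ hε)
  have hsq : ∫ x, (∑ i ∈ s, X i x) ^ 2 ∂μ
      = Var[∑ i ∈ s, X i; μ] + (∫ x, ∑ i ∈ s, X i x ∂μ) ^ 2 := by
    simp only [variance_eq_sub hS, Pi.pow_apply, Finset.sum_apply, sub_add_cancel]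
  calc ∫ x, ((∑ i ∈ s, X i x) / #s) ^ 2 ∂μ
      = (Var[∑ i ∈ s, X i; μ] + (∫ x, ∑ i ∈ s, X i x ∂μ) ^ 2) / (#s : ℝ) ^ 2 := by
        simp only [div_pow, integral_div, hsq]
    _ ≤ (#s * M + (#s * ε) ^ 2) / (#s : ℝ) ^ 2 := by
        gcongr ?_ / _
        exact add_le_add hvar <| sq_le_sq' (neg_le_of_abs_le hmean) (le_of_abs_le hmean)
    _ = M / #s + ε ^ 2 := by field_simp

theorem exists_tendsto_zero_forall_abs_le {α ι : Type*} {l : Filter α} {s : α → Finset ι}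
    {x : α → ι → ℝ} (h : ∀ ε > 0, ∀ᶠ a in l, ∀ i ∈ s a, |x a i| ≤ ε) :
    ∃ e : α → ℝ, Tendsto e l (𝓝 0) ∧ ∀ a, ∀ i ∈ s a, |x a i| ≤ e a := by
  refine ⟨fun a => ((s a).sup fun i => ‖x a i‖₊ : NNReal), ?_, fun a i hi => ?_⟩
  · rw [← NNReal.coe_zero, NNReal.tendsto_coe, tendsto_order]
    refine ⟨fun b hb => (not_lt_zero hb).elim, fun b hb => ?_⟩
    filter_upwards [h (b / 2) (by positivity)] with a ha
    refine (Finset.sup_le fun i hi => ?_).trans_lt (NNReal.half_lt_self hb.ne')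
    rw [← NNReal.coe_le_coe, coe_nnnorm, Real.norm_eq_abs, NNReal.coe_div, NNReal.coe_two]
    exact ha i hi
  · exact_mod_cast Finset.le_sup (f := fun i => ‖x a i‖₊) hi

section Blocks

variable {P : Measure Ω} {Z : ℕ → Ω → ℝ}

theorem memLp_blockMean {p : ENNReal} (hZ : ∀ i, MemLp (Z i) p P) (d k : ℕ) :
    MemLp (blockMean Z d k) p P := by
  convert (memLp_finsetSum (Ioc ((k - 1) * d) (k * d)) fun i _ => hZ i).mul_const (d⁻¹ : ℝ)
    using 2
  exact div_eq_mul_inv _ _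

theorem memLp_overallMean {p : ENNReal} (hZ : ∀ i, MemLp (Z i) p P) (n : ℕ) :
    MemLp (overallMean Z n) p P := by
  convert (memLp_finsetSum (Icc 1 n) fun i _ => hZ i).mul_const (n⁻¹ : ℝ) using 2
  exact div_eq_mul_inv _ _

theorem memLp_sq_blockMean_sub [IsFiniteMeasure P] (hZ : ∀ i, MemLp (Z i) 4 P) (μ : ℝ)
    (d k : ℕ) :
    MemLp (fun ω => (blockMean Z d k ω - μ) ^ 2) 2 P :=
  ((memLp_blockMean hZ d k).sub (memLp_const μ)).sq_of_four

theorem indepFun_blockMean {d k k' : ℕ} (hk : 1 ≤ k) (hk' : 1 ≤ k')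
    (h : IndepFun (blockVec Z d k) (blockVec Z d k') P) :
    IndepFun (blockMean Z d k) (blockMean Z d k') P := by
  have hφ : Measurable fun v : Fin d → ℝ => (∑ i, v i) / (d : ℝ) := by fun_prop
  have hcomp : ∀ j, 1 ≤ j → blockMean Z d j = (fun v => (∑ i, v i) / (d : ℝ)) ∘ blockVec Z d j :=
    fun j hj => funext (blockMean_eq_sum_blockVec Z d hj)
  rw [hcomp k hk, hcomp k' hk']
  exact h.comp hφ hφ

theorem integral_sq_average_blockMean_sub_sq_le [IsProbabilityMeasure P] {μ σ2 ε C : ℝ}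
    {d K : ℕ} (hZ : ∀ i, MemLp (Z i) 4 P) (hK : K ≠ 0)
    (hvar : ∀ k ∈ Icc 1 K, |(d : ℝ) * ∫ ω, (blockMean Z d k ω - μ) ^ 2 ∂P - σ2| ≤ ε)
    (hC2 : ∀ k ∈ Icc 1 K, (d : ℝ) ^ 2 * ∫ ω, (blockMean Z d k ω - μ) ^ 4 ∂P ≤ C)
    (hindep : (Icc 1 K : Set ℕ).Pairwise fun k k' =>
      IndepFun (blockVec Z d k) (blockVec Z d k') P) :
    ∫ ω, ((∑ k ∈ Icc 1 K, ((d : ℝ) * (blockMean Z d k ω - μ) ^ 2 - σ2)) / K) ^ 2 ∂P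
      ≤ 2 * (C + σ2 ^ 2) / K + ε ^ 2 := by
  have hY2 := memLp_sq_blockMean_sub hZ μ d
  have hsq : ∀ k ∈ Icc 1 K, ∫ ω, ((d : ℝ) * (blockMean Z d k ω - μ) ^ 2 - σ2) ^ 2 ∂P
      ≤ 2 * (C + σ2 ^ 2) := fun k hk => calc
    _ ≤ 2 * ∫ ω, ((d : ℝ) * (blockMean Z d k ω - μ) ^ 2) ^ 2 ∂P + 2 * ∫ _, σ2 ^ 2 ∂P :=
      integral_sq_sub_le ((hY2 k).const_mul _) (memLp_const σ2)
    _ = 2 * ((d : ℝ) ^ 2 * ∫ ω, (blockMean Z d k ω - μ) ^ 4 ∂P) + 2 * σ2 ^ 2 := by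
      simp only [mul_pow, ← pow_mul, integral_const_mul, integral_const, probReal_univ, one_smul]
    _ ≤ 2 * (C + σ2 ^ 2) := by linarith [hC2 k hk]
  have hmean : ∀ k ∈ Icc 1 K, |∫ ω, ((d : ℝ) * (blockMean Z d k ω - μ) ^ 2 - σ2) ∂P| ≤ ε := by
    intro k hk
    rw [integral_sub (((hY2 k).integrable one_le_two).const_mul _) (integrable_const σ2),
      integral_const_mul, integral_const, probReal_univ, one_smul]
    exact hvar k hk
  have hφ : Measurable fun x : ℝ => (d : ℝ) * (x - μ) ^ 2 - σ2 := by fun_prop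
  have hind : (Icc 1 K : Set ℕ).Pairwise fun k k' => IndepFun
      (fun ω => (d : ℝ) * (blockMean Z d k ω - μ) ^ 2 - σ2)
      (fun ω => (d : ℝ) * (blockMean Z d k' ω - μ) ^ 2 - σ2) P := fun k hk k' hk' hne =>
    (indepFun_blockMean (mem_Icc.1 hk).1 (mem_Icc.1 hk').1 (hindep hk hk' hne)).comp hφ hφ
  simpa only [Nat.card_Icc, Nat.add_sub_cancel] using integral_sq_average_le
    (X := fun k ω => (d : ℝ) * (blockMean Z d k ω - μ) ^ 2 - σ2)
    (nonempty_Icc.2 (Nat.one_le_iff_ne_zero.2 hK))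
    (fun k _ => ((hY2 k).const_mul _).sub (memLp_const σ2)) hind hsq hmean

theorem integral_sq_mul_sq_overallMean_sub_le {μ C : ℝ} {d K : ℕ} (hK : K ≠ 0)
    (hC1 : ((K * d : ℕ) : ℝ) ^ 2 * ∫ ω, (overallMean Z (K * d) ω - μ) ^ 4 ∂P ≤ C) :
    ∫ ω, ((d : ℝ) * (overallMean Z (K * d) ω - μ) ^ 2) ^ 2 ∂P ≤ C / K ^ 2 := by
  rw [le_div_iff₀ (by positivity)]
  calc (∫ ω, ((d : ℝ) * (overallMean Z (K * d) ω - μ) ^ 2) ^ 2 ∂P) * K ^ 2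
      = ((K * d : ℕ) : ℝ) ^ 2 * ∫ ω, (overallMean Z (K * d) ω - μ) ^ 4 ∂P := by
        simp only [mul_pow, ← pow_mul, integral_const_mul]
        push_cast
        ring
    _ ≤ C := hC1

theorem integral_sq_blockVarEst_sub_le [IsProbabilityMeasure P] {μ σ2 ε C : ℝ} {d K : ℕ}
    (hZ : ∀ i, MemLp (Z i) 4 P) (hK : K ≠ 0)
    (hvar : ∀ k ∈ Icc 1 K, |(d : ℝ) * ∫ ω, (blockMean Z d k ω - μ) ^ 2 ∂P - σ2| ≤ ε)
    (hC1 : ((K * d : ℕ) : ℝ) ^ 2 * ∫ ω, (overallMean Z (K * d) ω - μ) ^ 4 ∂P ≤ C)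
    (hC2 : ∀ k ∈ Icc 1 K, (d : ℝ) ^ 2 * ∫ ω, (blockMean Z d k ω - μ) ^ 4 ∂P ≤ C)
    (hindep : (Icc 1 K : Set ℕ).Pairwise fun k k' =>
      IndepFun (blockVec Z d k) (blockVec Z d k') P) :
    ∫ ω, (blockVarEst Z d K ω - σ2) ^ 2 ∂P
      ≤ 2 * (2 * (C + σ2 ^ 2) / K + ε ^ 2) + 2 * (C / K ^ 2) := by
  have hA : MemLp (fun ω => (∑ k ∈ Icc 1 K, ((d : ℝ) * (blockMean Z d k ω - μ) ^ 2 - σ2)) / K)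
      2 P := by
    have hξ : ∀ k, MemLp (fun ω => (d : ℝ) * (blockMean Z d k ω - μ) ^ 2 - σ2) 2 P :=
      fun k => ((memLp_sq_blockMean_sub hZ μ d k).const_mul _).sub (memLp_const σ2)
    simpa only [div_eq_mul_inv] using (memLp_finsetSum _ fun k _ => hξ k).mul_const (K⁻¹ : ℝ)
  have hB : MemLp (fun ω => (d : ℝ) * (overallMean Z (K * d) ω - μ) ^ 2) 2 P :=
    (((memLp_overallMean hZ _).sub (memLp_const μ)).sq_of_four).const_mul _
  simp_rw [blockVarEst_sub_eq Z μ σ2 hK]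
  grw [integral_sq_sub_le hA hB, integral_sq_average_blockMean_sub_sq_le hZ hK hvar hC2 hindep,
    integral_sq_mul_sq_overallMean_sub_le hK hC1]

end Blocks

theorem blockwise_variance_estimator_L2_consistent_general
    (P : Measure Ω) [IsProbabilityMeasure P]
    (Z : ℕ → Ω → ℝ) (μ σ2 : ℝ) (d K : ℕ → ℕ)
    (hmeas : ∀ i, Measurable (Z i))
    (hmom : ∀ i, Integrable (fun ω => (Z i ω) ^ 4) P)
    -- (i) `d_n → ∞` and `K_n → ∞`
    (hKtop : Tendsto (fun m => K m) atTop atTop)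
    -- (ii) `sup_{1≤k≤K_n} |d_n · E[(W_{n,k} − μ)²] − σ²| → 0` with `σ² ∈ (0, ∞)`
    (hvar : ∀ ε > (0 : ℝ), ∃ N, ∀ m ≥ N, ∀ k, 1 ≤ k → k ≤ K m →
      |(d m : ℝ) * ∫ ω, (blockMean Z (d m) k ω - μ) ^ 2 ∂P - σ2| ≤ ε)
    -- (iii) uniform fourth-moment bounds
    (C : ℝ)
    (hC1 : ∀ m,
      ((K m * d m : ℕ) : ℝ) ^ 2 * ∫ ω, (overallMean Z (K m * d m) ω - μ) ^ 4 ∂P ≤ C)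
    (hC2 : ∀ m, ∀ k, 1 ≤ k → k ≤ K m →
      (d m : ℝ) ^ 2 * ∫ ω, (blockMean Z (d m) k ω - μ) ^ 4 ∂P ≤ C)
    -- (iv) pairwise independence of the block random vectors
    (hindep : ∀ m, ∀ k k', 1 ≤ k → k ≤ K m → 1 ≤ k' → k' ≤ K m → k ≠ k' →
      IndepFun (blockVec Z (d m) k) (blockVec Z (d m) k') P) :
    Tendsto (fun m => ∫ ω, (blockVarEst Z (d m) (K m) ω - σ2) ^ 2 ∂P) atTop (𝓝 0) := by
  have hZ : ∀ i, MemLp (Z i) 4 P := fun i =>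
    (memLp_four_iff_integrable_pow_four (hmeas i).aestronglyMeasurable).2 (hmom i)
  obtain ⟨e, he, hvar_e⟩ := exists_tendsto_zero_forall_abs_le (s := fun m => Icc 1 (K m))
    (x := fun m k => (d m : ℝ) * ∫ ω, (blockMean Z (d m) k ω - μ) ^ 2 ∂P - σ2) fun ε hε =>
      let ⟨N, hN⟩ := hvar ε hε
      eventually_atTop.2 ⟨N, fun m hm k hk => hN m hm k (mem_Icc.1 hk).1 (mem_Icc.1 hk).2⟩
  have hKR : Tendsto (fun m => (K m : ℝ)) atTop atTop := tendsto_natCast_atTop_atTop.comp hKtop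
  have hbound : Tendsto (fun m => 2 * (2 * (C + σ2 ^ 2) / K m + e m ^ 2) + 2 * (C / K m ^ 2))
      atTop (𝓝 0) := by
    simpa using ((tendsto_const_nhds.div_atTop hKR).add (he.pow 2)).const_mul 2 |>.add
      ((tendsto_const_nhds.div_atTop ((tendsto_pow_atTop two_ne_zero).comp hKR)).const_mul 2)
  refine squeeze_zero' (Eventually.of_forall fun m => integral_nonneg fun ω => sq_nonneg _)
    ?_ hbound
  filter_upwards [hKtop.eventually_ge_atTop 1] with m hm
  exact integral_sq_blockVarEst_sub_le hZ (by omega) (hvar_e m) (hC1 m)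
    (fun k hk => hC2 m k (mem_Icc.1 hk).1 (mem_Icc.1 hk).2) fun k hk k' hk' hne =>
      hindep m k k' (mem_Icc.1 hk).1 (mem_Icc.1 hk).2 (mem_Icc.1 hk').1 (mem_Icc.1 hk').2 hne

/-- **Theorem 1** (L²-consistency of the blockwise bootstrap variance estimator).
Under block-level moment conditions and pairwise independence of the blocks,
the blockwise variance estimator `σ̂_n²` converges to `σ²` in `L²`. -/
theorem blockwise_variance_estimator_L2_consistent
    (P : Measure Ω) [IsProbabilityMeasure P]
    (Z : ℕ → Ω → ℝ) (μ σ2 : ℝ) (d K : ℕ → ℕ)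
    (hmeas : ∀ i, Measurable (Z i))
    (hmom : ∀ i, Integrable (fun ω => (Z i ω) ^ 4) P)
    (hmean : ∀ i, ∫ ω, Z i ω ∂P = μ)
    (hd : ∀ m, 0 < d m) (hK : ∀ m, 0 < K m)
    -- (i) `d_n → ∞` and `K_n → ∞`
    (hdtop : Tendsto (fun m => d m) atTop atTop)
    (hKtop : Tendsto (fun m => K m) atTop atTop)
    -- (ii) `sup_{1≤k≤K_n} |d_n · E[(W_{n,k} − μ)²] − σ²| → 0` with `σ² ∈ (0, ∞)`
    (hσ2 : 0 < σ2)
    (hvar : ∀ ε > (0 : ℝ), ∃ N, ∀ m ≥ N, ∀ k, 1 ≤ k → k ≤ K m →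
      |(d m : ℝ) * ∫ ω, (blockMean Z (d m) k ω - μ) ^ 2 ∂P - σ2| ≤ ε)
    -- (iii) uniform fourth-moment bounds
    (C : ℝ)
    (hC1 : ∀ m,
      ((K m * d m : ℕ) : ℝ) ^ 2 * ∫ ω, (overallMean Z (K m * d m) ω - μ) ^ 4 ∂P ≤ C)
    (hC2 : ∀ m, ∀ k, 1 ≤ k → k ≤ K m →
      (d m : ℝ) ^ 2 * ∫ ω, (blockMean Z (d m) k ω - μ) ^ 4 ∂P ≤ C)
    -- (iv) pairwise independence of the block random vectors
    (hindep : ∀ m, ∀ k k', 1 ≤ k → k ≤ K m → 1 ≤ k' → k' ≤ K m → k ≠ k' →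
      IndepFun (blockVec Z (d m) k) (blockVec Z (d m) k') P) :
    Tendsto (fun m => ∫ ω, (blockVarEst Z (d m) (K m) ω - σ2) ^ 2 ∂P) atTop (𝓝 0) :=
  blockwise_variance_estimator_L2_consistent_general P Z μ σ2 d K hmeas hmom hKtop hvar C hC1 hC2
    hindep
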